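/- arXiv:2006.05745 — 6 statements merged into one kernel-verified Lean document; each statement's English description precedes it below -/
import Mathlib

section
/- Let n, m, k be positive natural numbers, let X be a real n×m matrix, L a real m×m matrix, λ₁ a real number and λ₂ > 0 a real number, and let Σ be a real m×m matrix satisfying Σ Σᵀ = I_m + λ₁ L. Set X̃ = X Σ. Then for every real n×k matrix A, the matrix Aᵀ X (I_m + λ₁ L) Xᵀ A + λ₂ I_k is invertible, the function B ↦ ‖I_k − Aᵀ X̃ B‖_F² + λ₂ ‖B‖_F² over real m×k matrices B attains a minimum, and this minimum value equals λ₂ · Tr[(Aᵀ X (I_m + λ₁ L) Xᵀ A + λ₂ I_k)⁻¹]. Consequently, a matrix A minimizes Tr[(Aᵀ X (I_m + λ₁ L) Xᵀ A + λ₂ I_k)⁻¹] over a set S of n×k matrices if and only if there exists an m×k matrix B such that (A, B) minimizes ‖I_k − Aᵀ X̃ B‖_F² + λ₂ ‖B‖_F² over S × (all m×k matrices). -/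
open Matrix

private lemma trace_transpose_mul_self_nonneg' {a b : ℕ} (D : Matrix (Fin a) (Fin b) ℝ) :
    0 ≤ Matrix.trace (Dᵀ * D) := by
  rw [Matrix.trace]
  refine Finset.sum_nonneg fun i _ => ?_
  simp only [Matrix.diag_apply, Matrix.mul_apply, Matrix.transpose_apply]
  exact Finset.sum_nonneg fun j _ => mul_self_nonneg _

private lemma aop_key' {m k : ℕ} (lam2 : ℝ) (hlam2 : 0 < lam2)
    (Y : Matrix (Fin k) (Fin m) ℝ) :
    IsUnit (Y * Yᵀ + lam2 • (1 : Matrix (Fin k) (Fin k) ℝ)) ∧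
    ∃ B₀ : Matrix (Fin m) (Fin k) ℝ,
      (∀ B : Matrix (Fin m) (Fin k) ℝ,
        Matrix.trace ((1 - Y * B₀)ᵀ * (1 - Y * B₀)) + lam2 * Matrix.trace (B₀ᵀ * B₀)
          ≤ Matrix.trace ((1 - Y * B)ᵀ * (1 - Y * B)) + lam2 * Matrix.trace (Bᵀ * B)) ∧
      Matrix.trace ((1 - Y * B₀)ᵀ * (1 - Y * B₀)) + lam2 * Matrix.trace (B₀ᵀ * B₀)
        = lam2 * Matrix.trace (Y * Yᵀ + lam2 • (1 : Matrix (Fin k) (Fin k) ℝ))⁻¹ := by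
  set M : Matrix (Fin k) (Fin k) ℝ := Y * Yᵀ + lam2 • 1 with hM
  have hMpd : M.PosDef := by
    have h1 : (lam2 • (1 : Matrix (Fin k) (Fin k) ℝ)).PosDef := by
      rw [smul_one_eq_diagonal]
      exact posDef_diagonal_iff.mpr fun i => hlam2
    have h2 : (Y * Yᵀ).PosSemidef := by
      have := Matrix.posSemidef_self_mul_conjTranspose Y
      rwa [Matrix.conjTranspose_eq_transpose_of_trivial] at this
    exact Matrix.PosDef.posSemidef_add h2 h1
  have hMunit : IsUnit M := hMpd.isUnit
  have hMM : M * M⁻¹ = 1 := Matrix.mul_nonsing_inv _ ((Matrix.isUnit_iff_isUnit_det _).mp hMunit)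
  refine ⟨hMunit, ?_⟩
  set N : Matrix (Fin m) (Fin m) ℝ := Yᵀ * Y + lam2 • 1 with hN
  set B₀ : Matrix (Fin m) (Fin k) ℝ := Yᵀ * M⁻¹ with hB₀
  have hYB₀ : Y * B₀ = 1 - lam2 • M⁻¹ := by
    rw [hB₀, ← Matrix.mul_assoc]
    have h : Y * Yᵀ = M - lam2 • 1 := by rw [hM, add_sub_cancel_right]
    rw [h, Matrix.sub_mul, hMM, Matrix.smul_mul, Matrix.one_mul]
  have hNY : N * Yᵀ = Yᵀ * M := by
    rw [hN, hM, Matrix.add_mul, Matrix.mul_add, Matrix.smul_mul, Matrix.one_mul,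
      Matrix.mul_smul, Matrix.mul_one, Matrix.mul_assoc]
  have hNB₀ : N * B₀ = Yᵀ := by
    rw [hB₀, ← Matrix.mul_assoc, hNY, Matrix.mul_assoc, hMM, Matrix.mul_one]
  have hNsymm : Nᵀ = N := by
    rw [hN]
    simp [Matrix.transpose_add, Matrix.transpose_mul, Matrix.transpose_smul]
  have hquadmat : ∀ C : Matrix (Fin m) (Fin k) ℝ,
      Cᵀ * N * C = (Y * C)ᵀ * (Y * C) + lam2 • (Cᵀ * C) := by
    intro C
    rw [hN, Matrix.mul_add, Matrix.add_mul, Matrix.mul_smul, Matrix.smul_mul, Matrix.mul_one,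
      Matrix.transpose_mul, Matrix.mul_assoc, Matrix.mul_assoc, Matrix.mul_assoc]
  have hnonneg : ∀ C : Matrix (Fin m) (Fin k) ℝ, 0 ≤ Matrix.trace (Cᵀ * N * C) := by
    intro C
    rw [hquadmat C, Matrix.trace_add, Matrix.trace_smul, smul_eq_mul]
    exact add_nonneg (trace_transpose_mul_self_nonneg' _)
      (mul_nonneg hlam2.le (trace_transpose_mul_self_nonneg' _))
  have expand : ∀ B : Matrix (Fin m) (Fin k) ℝ,
      Matrix.trace ((1 - Y * B)ᵀ * (1 - Y * B)) + lam2 * Matrix.trace (Bᵀ * B)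
        = Matrix.trace (1 : Matrix (Fin k) (Fin k) ℝ) - 2 * Matrix.trace (Y * B)
          + Matrix.trace (Bᵀ * N * B) := by
    intro B
    have h1 : (1 - Y * B)ᵀ * (1 - Y * B)
        = 1 - (Y * B)ᵀ - (Y * B) + (Y * B)ᵀ * (Y * B) := by
      rw [Matrix.transpose_sub, Matrix.transpose_one]
      noncomm_ring
    rw [h1, hquadmat B, Matrix.trace_add, Matrix.trace_sub, Matrix.trace_sub,
      Matrix.trace_transpose, Matrix.trace_add, Matrix.trace_smul, smul_eq_mul]
    ring
  have hB₀NB₀ : Matrix.trace (B₀ᵀ * N * B₀) = Matrix.trace (Y * B₀) := by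
    rw [Matrix.mul_assoc, hNB₀, ← Matrix.transpose_mul, Matrix.trace_transpose]
  have quad : ∀ B : Matrix (Fin m) (Fin k) ℝ,
      Matrix.trace ((B - B₀)ᵀ * N * (B - B₀))
        = Matrix.trace (Bᵀ * N * B) - 2 * Matrix.trace (Y * B) + Matrix.trace (Y * B₀) := by
    intro B
    have hexp : (B - B₀)ᵀ * N * (B - B₀)
        = Bᵀ * N * B - Bᵀ * (N * B₀) - B₀ᵀ * N * B + B₀ᵀ * N * B₀ := by
      rw [Matrix.transpose_sub, Matrix.sub_mul, Matrix.sub_mul, Matrix.mul_sub,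
        Matrix.mul_sub, Matrix.mul_assoc Bᵀ N B₀]
      abel
    have e1 : Bᵀ * (N * B₀) = (Y * B)ᵀ := by rw [hNB₀, Matrix.transpose_mul]
    have e2 : B₀ᵀ * N = Y := by
      have h := Matrix.transpose_mul N B₀
      rw [hNB₀] at h
      rw [← hNsymm, ← h, Matrix.transpose_transpose]
    rw [hexp, e1, e2, Matrix.trace_add, Matrix.trace_sub, Matrix.trace_sub,
      Matrix.trace_transpose]
    ring
  have hYB₀tr : Matrix.trace (Y * B₀)
      = Matrix.trace (1 : Matrix (Fin k) (Fin k) ℝ) - lam2 * Matrix.trace M⁻¹ := by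
    rw [hYB₀, Matrix.trace_sub, Matrix.trace_smul, smul_eq_mul]
  refine ⟨B₀, ?_, ?_⟩
  · intro B
    have h0 := hnonneg (B - B₀)
    rw [quad B] at h0
    have hfB := expand B
    have hfB₀ := expand B₀
    rw [hB₀NB₀] at hfB₀
    linarith
  · have hfB₀ := expand B₀
    rw [hB₀NB₀, hYB₀tr] at hfB₀
    rw [hfB₀]
    ring


/-- The paper's Theorem 1 (A-optimality of the graph regularized regression model).
With `X̃ = X Σ` and `Σ Σᵀ = I + λ₁ L`, for every `A` the matrix
`Aᵀ X (I + λ₁ L) Xᵀ A + λ₂ I` is invertible, the objective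
`B ↦ ‖I − Aᵀ X̃ B‖_F² + λ₂ ‖B‖_F²` attains a minimum whose value is
`λ₂ Tr[(Aᵀ X (I + λ₁ L) Xᵀ A + λ₂ I)⁻¹]`, and consequently `A` minimizes
`Tr[(Aᵀ X (I + λ₁ L) Xᵀ A + λ₂ I)⁻¹]` over a set `S` iff some pair `(A, B)`
minimizes `‖I − Aᵀ X̃ B‖_F² + λ₂ ‖B‖_F²` over `S × (all m×k matrices)`. -/
theorem aop_equivalence_theorem
    (n m k : ℕ) (hn : 0 < n) (hm : 0 < m) (hk : 0 < k)
    (X : Matrix (Fin n) (Fin m) ℝ) (L : Matrix (Fin m) (Fin m) ℝ)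
    (lam1 lam2 : ℝ) (hlam2 : 0 < lam2)
    (Sg : Matrix (Fin m) (Fin m) ℝ) (hSg : Sg * Sgᵀ = 1 + lam1 • L)
    (Xt : Matrix (Fin n) (Fin m) ℝ) (hXt : Xt = X * Sg)
    (S : Set (Matrix (Fin n) (Fin k) ℝ)) :
    (∀ A : Matrix (Fin n) (Fin k) ℝ,
      IsUnit (Aᵀ * X * (1 + lam1 • L) * Xᵀ * A + lam2 • (1 : Matrix (Fin k) (Fin k) ℝ))) ∧
    (∀ A : Matrix (Fin n) (Fin k) ℝ,
      ∃ B₀ : Matrix (Fin m) (Fin k) ℝ,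
        (∀ B : Matrix (Fin m) (Fin k) ℝ,
          Matrix.trace ((1 - Aᵀ * Xt * B₀)ᵀ * (1 - Aᵀ * Xt * B₀))
              + lam2 * Matrix.trace (B₀ᵀ * B₀)
            ≤ Matrix.trace ((1 - Aᵀ * Xt * B)ᵀ * (1 - Aᵀ * Xt * B))
              + lam2 * Matrix.trace (Bᵀ * B)) ∧
        Matrix.trace ((1 - Aᵀ * Xt * B₀)ᵀ * (1 - Aᵀ * Xt * B₀))
            + lam2 * Matrix.trace (B₀ᵀ * B₀)
          = lam2 * Matrix.trace
              (Aᵀ * X * (1 + lam1 • L) * Xᵀ * A + lam2 • (1 : Matrix (Fin k) (Fin k) ℝ))⁻¹) ∧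
    (∀ A ∈ S,
      ((∀ A' ∈ S,
          Matrix.trace
              (Aᵀ * X * (1 + lam1 • L) * Xᵀ * A + lam2 • (1 : Matrix (Fin k) (Fin k) ℝ))⁻¹
            ≤ Matrix.trace
              (A'ᵀ * X * (1 + lam1 • L) * Xᵀ * A' + lam2 • (1 : Matrix (Fin k) (Fin k) ℝ))⁻¹)
        ↔ (∃ B : Matrix (Fin m) (Fin k) ℝ,
            ∀ A' ∈ S, ∀ B' : Matrix (Fin m) (Fin k) ℝ,
              Matrix.trace ((1 - Aᵀ * Xt * B)ᵀ * (1 - Aᵀ * Xt * B))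
                  + lam2 * Matrix.trace (Bᵀ * B)
                ≤ Matrix.trace ((1 - A'ᵀ * Xt * B')ᵀ * (1 - A'ᵀ * Xt * B'))
                  + lam2 * Matrix.trace (B'ᵀ * B')))) := by

  have hYY : ∀ A : Matrix (Fin n) (Fin k) ℝ,
      Aᵀ * X * (1 + lam1 • L) * Xᵀ * A = (Aᵀ * Xt) * (Aᵀ * Xt)ᵀ := by
    intro A
    rw [hXt, ← hSg]
    simp [Matrix.transpose_mul, Matrix.mul_assoc]
  have key := fun A : Matrix (Fin n) (Fin k) ℝ => aop_key' lam2 hlam2 (Aᵀ * Xt)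
  refine ⟨fun A => ?_, fun A => ?_, fun A hA => ?_⟩
  · rw [hYY A]
    exact (key A).1
  · obtain ⟨B₀, hmin, hval⟩ := (key A).2
    exact ⟨B₀, hmin, by rw [hYY A]; exact hval⟩
  · choose Bf hBmin hBval using fun A' : Matrix (Fin n) (Fin k) ℝ => (key A').2
    have hval' : ∀ A' : Matrix (Fin n) (Fin k) ℝ,
        Matrix.trace ((1 - A'ᵀ * Xt * Bf A')ᵀ * (1 - A'ᵀ * Xt * Bf A'))
            + lam2 * Matrix.trace ((Bf A')ᵀ * Bf A')
          = lam2 * Matrix.trace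
              (A'ᵀ * X * (1 + lam1 • L) * Xᵀ * A' + lam2 • (1 : Matrix (Fin k) (Fin k) ℝ))⁻¹ := by
      intro A'
      rw [hYY A']
      exact hBval A'
    constructor
    · intro hopt
      refine ⟨Bf A, fun A' hA' B' => ?_⟩
      calc Matrix.trace ((1 - Aᵀ * Xt * Bf A)ᵀ * (1 - Aᵀ * Xt * Bf A))
              + lam2 * Matrix.trace ((Bf A)ᵀ * Bf A)
          = lam2 * Matrix.trace
              (Aᵀ * X * (1 + lam1 • L) * Xᵀ * A + lam2 • (1 : Matrix (Fin k) (Fin k) ℝ))⁻¹ :=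
            hval' A
        _ ≤ lam2 * Matrix.trace
              (A'ᵀ * X * (1 + lam1 • L) * Xᵀ * A' + lam2 • (1 : Matrix (Fin k) (Fin k) ℝ))⁻¹ :=
            mul_le_mul_of_nonneg_left (hopt A' hA') hlam2.le
        _ = Matrix.trace ((1 - A'ᵀ * Xt * Bf A')ᵀ * (1 - A'ᵀ * Xt * Bf A'))
              + lam2 * Matrix.trace ((Bf A')ᵀ * Bf A') := (hval' A').symm
        _ ≤ _ := hBmin A' B'
    · rintro ⟨B, hB⟩ A' hA'
      have h1 : lam2 * Matrix.trace
            (Aᵀ * X * (1 + lam1 • L) * Xᵀ * A + lam2 • (1 : Matrix (Fin k) (Fin k) ℝ))⁻¹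
          ≤ lam2 * Matrix.trace
            (A'ᵀ * X * (1 + lam1 • L) * Xᵀ * A' + lam2 • (1 : Matrix (Fin k) (Fin k) ℝ))⁻¹ := by
        calc lam2 * Matrix.trace
              (Aᵀ * X * (1 + lam1 • L) * Xᵀ * A + lam2 • (1 : Matrix (Fin k) (Fin k) ℝ))⁻¹
            = Matrix.trace ((1 - Aᵀ * Xt * Bf A)ᵀ * (1 - Aᵀ * Xt * Bf A))
                + lam2 * Matrix.trace ((Bf A)ᵀ * Bf A) := (hval' A).symm
          _ ≤ Matrix.trace ((1 - Aᵀ * Xt * B)ᵀ * (1 - Aᵀ * Xt * B))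
                + lam2 * Matrix.trace (Bᵀ * B) := hBmin A B
          _ ≤ Matrix.trace ((1 - A'ᵀ * Xt * Bf A')ᵀ * (1 - A'ᵀ * Xt * Bf A'))
                + lam2 * Matrix.trace ((Bf A')ᵀ * Bf A') := hB A' hA' (Bf A')
          _ = lam2 * Matrix.trace
              (A'ᵀ * X * (1 + lam1 • L) * Xᵀ * A' + lam2 • (1 : Matrix (Fin k) (Fin k) ℝ))⁻¹ :=
            hval' A'
      exact le_of_mul_le_mul_left h1 hlam2
end

section
/- Let k, m be positive natural numbers, N a real k×m matrix, and λ₂ > 0. With B* = (Nᵀ N + λ₂ I_m)⁻¹ Nᵀ, the minimum value of B ↦ ‖I_k − N B‖_F² + λ₂ ‖B‖_F² satisfies ‖I_k − N B*‖_F² + λ₂ ‖B*‖_F² = λ₂ · Tr[(N Nᵀ + λ₂ I_k)⁻¹]. -/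
open Matrix

/-- Minimum value of the regularized least-squares objective (core of the paper's
Theorem 1): with `B* = (Nᵀ N + λ₂ I)⁻¹ Nᵀ`,
`‖I − N B*‖_F² + λ₂ ‖B*‖_F² = λ₂ Tr[(N Nᵀ + λ₂ I)⁻¹]`. -/
theorem ridge_regression_min_value
    (k m : ℕ) (hk : 0 < k) (hm : 0 < m)
    (N : Matrix (Fin k) (Fin m) ℝ) (lam2 : ℝ) (hlam2 : 0 < lam2) :
    Matrix.trace ((1 - N * ((Nᵀ * N + lam2 • 1)⁻¹ * Nᵀ))ᵀ *
        (1 - N * ((Nᵀ * N + lam2 • 1)⁻¹ * Nᵀ)))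
      + lam2 * Matrix.trace (((Nᵀ * N + lam2 • 1)⁻¹ * Nᵀ)ᵀ *
        ((Nᵀ * N + lam2 • 1)⁻¹ * Nᵀ))
    = lam2 * Matrix.trace (N * Nᵀ + lam2 • (1 : Matrix (Fin k) (Fin k) ℝ))⁻¹ := by
  set A : Matrix (Fin m) (Fin m) ℝ := Nᵀ * N + lam2 • 1 with hAdef
  set P : Matrix (Fin k) (Fin k) ℝ := N * Nᵀ + lam2 • 1 with hPdef
  have hId : ∀ (n : ℕ), ((lam2 • 1 : Matrix (Fin n) (Fin n) ℝ)).PosDef := by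
    intro n
    rw [smul_one_eq_diagonal]
    exact posDef_diagonal_iff.mpr fun _ => hlam2
  have hApd : A.PosDef := by
    have h1 := posSemidef_conjTranspose_mul_self N
    rw [conjTranspose_eq_transpose_of_trivial] at h1
    exact Matrix.PosDef.posSemidef_add h1 (hId m)
  have hPpd : P.PosDef := by
    have h1 := posSemidef_self_mul_conjTranspose N
    rw [conjTranspose_eq_transpose_of_trivial] at h1
    exact Matrix.PosDef.posSemidef_add h1 (hId k)
  have hAu : IsUnit A.det := hApd.det_pos.ne'.isUnit
  have hPu : IsUnit P.det := hPpd.det_pos.ne'.isUnit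
  -- push-through identity
  have key : A * Nᵀ = Nᵀ * P := by
    rw [hAdef, hPdef, Matrix.add_mul, Matrix.mul_add, Matrix.smul_mul, Matrix.mul_smul,
      Matrix.one_mul, Matrix.mul_one, Matrix.mul_assoc]
  have hB : A⁻¹ * Nᵀ = Nᵀ * P⁻¹ := by
    have h2 : A⁻¹ * (A * Nᵀ) * P⁻¹ = A⁻¹ * (Nᵀ * P) * P⁻¹ := by rw [key]
    rw [Matrix.nonsing_inv_mul_cancel_left _ _ hAu, Matrix.mul_assoc A⁻¹,
      Matrix.mul_nonsing_inv_cancel_right _ _ hPu] at h2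
    exact h2.symm
  have hQsym : (P⁻¹)ᵀ = P⁻¹ := by
    rw [Matrix.transpose_nonsing_inv]
    congr 1
    simp [hPdef, transpose_add, transpose_mul, transpose_transpose, transpose_smul]
  have hNNT : N * Nᵀ = P - lam2 • 1 := by simp [hPdef]
  have hone : (1 : Matrix (Fin k) (Fin k) ℝ) - N * (A⁻¹ * Nᵀ) = lam2 • P⁻¹ := by
    rw [hB, ← Matrix.mul_assoc, hNNT, Matrix.sub_mul, Matrix.mul_nonsing_inv _ hPu,
      Matrix.smul_mul, Matrix.one_mul]
    abel
  have hBB : (A⁻¹ * Nᵀ)ᵀ * (A⁻¹ * Nᵀ) = P⁻¹ * (N * Nᵀ) * P⁻¹ := by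
    rw [hB, transpose_mul, transpose_transpose, hQsym, Matrix.mul_assoc,
      ← Matrix.mul_assoc N, ← Matrix.mul_assoc (P⁻¹), ← Matrix.mul_assoc (P⁻¹)]
  have hmid : P⁻¹ * (N * Nᵀ) * P⁻¹ = P⁻¹ - lam2 • (P⁻¹ * P⁻¹) := by
    rw [hNNT, Matrix.mul_sub, Matrix.nonsing_inv_mul _ hPu, Matrix.mul_smul, Matrix.mul_one,
      Matrix.sub_mul, Matrix.one_mul, Matrix.smul_mul]
  rw [hone, hBB, hmid, transpose_smul, hQsym, Matrix.smul_mul, Matrix.mul_smul, smul_smul,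
    trace_smul, trace_sub, trace_smul]
  simp only [smul_eq_mul]
  ring
end

section
/- Let σ, σ', b, b', c be positive real numbers and λ₂ > 0, and suppose b ≥ b' and σ² b ≤ σ'² b'. Define the updated values β = ((σ b)² + λ₂)/(c σ² b) and β' = ((σ' b')² + λ₂)/(c σ'² b'). Then σ² β ≤ σ'² β' and β ≥ β'. -/
/-- One-step invariant of the AOP iteration (Theorem 2 of the paper):
the update `β ↦ ((σβ)² + λ₂)/(c σ² β)` preserves the ordering of the amplitudes
and the reverse ordering of the quantities `σ² β`. -/
theorem aop_update_preserves_order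
    (σ σ' b b' c lam2 : ℝ)
    (hσ : 0 < σ) (hσ' : 0 < σ') (hb : 0 < b) (hb' : 0 < b') (hc : 0 < c)
    (hlam2 : 0 < lam2)
    (h1 : b ≥ b') (h2 : σ ^ 2 * b ≤ σ' ^ 2 * b') :
    σ ^ 2 * (((σ * b) ^ 2 + lam2) / (c * σ ^ 2 * b))
      ≤ σ' ^ 2 * (((σ' * b') ^ 2 + lam2) / (c * σ' ^ 2 * b')) ∧
    ((σ * b) ^ 2 + lam2) / (c * σ ^ 2 * b)
      ≥ ((σ' * b') ^ 2 + lam2) / (c * σ' ^ 2 * b') := by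
  have hσ2 : (0:ℝ) < σ ^ 2 := by positivity
  have hσ'2 : (0:ℝ) < σ' ^ 2 := by positivity
  constructor
  · rw [mul_div_assoc', mul_div_assoc', div_le_div_iff₀ (by positivity) (by positivity)]
    nlinarith [mul_pos hb hb', mul_le_mul_of_nonneg_right h2 (le_of_lt (mul_pos hb hb')),
      mul_le_mul_of_nonneg_left h1 hlam2.le, mul_pos hσ2 hσ'2,
      mul_nonneg (mul_nonneg hc.le hlam2.le) (mul_nonneg hσ2.le hσ'2.le)]
  · rw [ge_iff_le, div_le_div_iff₀ (by positivity) (by positivity)]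
    nlinarith [mul_le_mul_of_nonneg_left (sub_nonneg.mpr h1)
        (by positivity : (0:ℝ) ≤ c * (σ ^ 2 * σ' ^ 2 * (b * b'))),
      mul_le_mul_of_nonneg_left h2 (by positivity : (0:ℝ) ≤ c * lam2)]
end

section
/- Let k ≥ 1 be a natural number, λ₂ > 0, σ : Fin k → ℝ positive and nonincreasing, and c : ℕ → ℝ positive. Define β : ℕ → Fin k → ℝ by β₀(j) = 1/√k for all j and β_{i+1}(j) = ((σ_j β_i(j))² + λ₂)/(c_i σ_j² β_i(j)). Then for every i ∈ ℕ: each β_i(j) is positive, the map j ↦ β_i(j) is nondecreasing, and the map j ↦ σ_j² β_i(j) is nonincreasing. In particular, for all i and all indices j ≥ j', β_i(j) ≥ β_i(j'). -/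
/-!
Write `w j = σ j ^ 2`. The update splits as
`β' = β / c + (λ / c) / (w β)` and `w β' = (w β) / c + (λ / c) / β`,
so if `β` is monotone and `w β` antitone (and both positive), each summand of `β'` is monotone
and each summand of `w β'` is antitone. The uniform start satisfies both orderings because `w`
is antitone, and induction on the iteration does the rest.
-/

section OrderLemmas

variable {ι : Type*} [Preorder ι] {f : ι → ℝ} {a : ℝ}

theorem Antitone.const_div_of_pos (hf : Antitone f) (hpos : ∀ j, 0 < f j) (ha : 0 ≤ a) :
    Monotone fun j => a / f j :=
  fun _ y hxy => div_le_div_of_nonneg_left ha (hpos y) (hf hxy)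

theorem Monotone.const_div_of_pos (hf : Monotone f) (hpos : ∀ j, 0 < f j) (ha : 0 ≤ a) :
    Antitone fun j => a / f j :=
  fun x _ hxy => div_le_div_of_nonneg_left ha (hpos x) (hf hxy)

end OrderLemmas

namespace AOP

variable {ι : Type*}

noncomputable def step (w : ι → ℝ) (lam c : ℝ) (b : ι → ℝ) (j : ι) : ℝ :=
  (w j * b j ^ 2 + lam) / (c * w j * b j)

variable {w b : ι → ℝ} {lam c : ℝ}

theorem step_eq {j : ι} (hw : w j ≠ 0) (hb : b j ≠ 0) (hc : c ≠ 0) :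
    step w lam c b j = b j / c + lam / c / (w j * b j) := by
  unfold step; field_simp

theorem mul_step_eq {j : ι} (hw : w j ≠ 0) (hb : b j ≠ 0) (hc : c ≠ 0) :
    w j * step w lam c b j = w j * b j / c + lam / c / b j := by
  rw [step_eq hw hb hc]; field_simp

variable [Preorder ι]

def OrderInvariant (w b : ι → ℝ) : Prop :=
  (∀ j, 0 < b j) ∧ Monotone b ∧ Antitone fun j => w j * b j

theorem orderInvariant_const (hw : Antitone w) {a : ℝ} (ha : 0 < a) :
    OrderInvariant w fun _ => a :=
  ⟨fun _ => ha, monotone_const, fun _ _ h => mul_le_mul_of_nonneg_right (hw h) ha.le⟩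

theorem OrderInvariant.step (h : OrderInvariant w b) (hw : ∀ j, 0 < w j) (hc : 0 < c)
    (hlam : 0 ≤ lam) : OrderInvariant w (step w lam c b) := by
  obtain ⟨hb, hmono, hanti⟩ := h
  have hwb : ∀ j, 0 < w j * b j := fun j => mul_pos (hw j) (hb j)
  have hlamc : 0 ≤ lam / c := div_nonneg hlam hc.le
  have hstep j := step_eq (lam := lam) (hw j).ne' (hb j).ne' hc.ne'
  have hmul_step j := mul_step_eq (lam := lam) (hw j).ne' (hb j).ne' hc.ne'
  refine ⟨fun j => ?_, ?_, ?_⟩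
  · rw [hstep]
    exact add_pos_of_pos_of_nonneg (div_pos (hb j) hc) (div_nonneg hlamc (hwb j).le)
  · rw [funext hstep]
    exact (hmono.div_const hc.le).add (hanti.const_div_of_pos hwb hlamc)
  · rw [funext hmul_step]
    exact ((monotone_div_right_of_nonneg hc.le).comp_antitone hanti).add
      (hmono.const_div_of_pos hb hlamc)

end AOP

/-- The paper's Theorem 2 in full sequence form: in the reformulated AOP iteration
with nonincreasing singular values, uniform initialization `β₀(j) = 1/√k` and
positive normalization constants, each `β_i(j)` is positive, `j ↦ β_i(j)` is
nondecreasing and `j ↦ σ_j² β_i(j)` is nonincreasing at every iteration. -/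
theorem aop_iteration_order_invariants
    (k : ℕ) (hk : 1 ≤ k) (lam2 : ℝ) (hlam2 : 0 < lam2)
    (σ : Fin k → ℝ) (hσpos : ∀ j, 0 < σ j) (hσanti : Antitone σ)
    (c : ℕ → ℝ) (hc : ∀ i, 0 < c i)
    (β : ℕ → Fin k → ℝ)
    (hβ0 : ∀ j, β 0 j = 1 / Real.sqrt k)
    (hβsucc : ∀ i j, β (i + 1) j = ((σ j * β i j) ^ 2 + lam2) / (c i * σ j ^ 2 * β i j)) :
    ∀ i : ℕ,
      (∀ j, 0 < β i j) ∧
      Monotone (β i) ∧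
      Antitone (fun j => σ j ^ 2 * β i j) ∧
      (∀ j j' : Fin k, j' ≤ j → β i j' ≤ β i j) := by
  have hw : ∀ j, 0 < σ j ^ 2 := fun j => pow_pos (hσpos j) 2
  have hw_anti : Antitone fun j => σ j ^ 2 :=
    fun _ b hab => pow_le_pow_left₀ (hσpos b).le (hσanti hab) 2
  have hinv : ∀ i, AOP.OrderInvariant (fun j => σ j ^ 2) (β i) := by
    intro i
    induction i with
    | zero =>
      have hsqrt : 0 < Real.sqrt k := Real.sqrt_pos.mpr (Nat.cast_pos.mpr hk)
      rw [funext hβ0]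
      exact AOP.orderInvariant_const hw_anti (by positivity)
    | succ i ih =>
      have hβ : β (i + 1) = AOP.step (fun j => σ j ^ 2) lam2 (c i) (β i) := by
        funext j; rw [hβsucc, mul_pow]; rfl
      rw [hβ]
      exact ih.step hw (hc i) hlam2.le
  intro i
  obtain ⟨hpos, hmono, hanti⟩ := hinv i
  exact ⟨hpos, hmono, hanti, fun _ _ h => hmono h⟩
end

section
/- Let k ≥ 1 be a natural number, κ ≥ 1, λ₂ > 0, c > 0, and let σ, β : Fin k → ℝ be positive with σ nonincreasing, σ(0) = 1, σ(k−1) = 1/κ, β nondecreasing, and j ↦ σ_j² β_j nonincreasing. Define β'(j) = ((σ_j β_j)² + λ₂)/(c σ_j² β_j). Then the maximum of β' over j is β'(k−1) = (β(k−1)² + λ₂ κ²)/(c β(k−1)) and the minimum of β' over j is β'(0) = (β(0)² + λ₂)/(c β(0)). -/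
/-- Max/min formula of Appendix A of the paper: under the ordering invariants of
Theorem 2, the largest updated amplitude is `β'(k−1) = (β(k−1)² + λ₂κ²)/(c β(k−1))`
and the smallest is `β'(0) = (β(0)² + λ₂)/(c β(0))`. -/
theorem aop_update_max_min
    (k : ℕ) (hk : 1 ≤ k) (κ lam2 c : ℝ)
    (hκ : 1 ≤ κ) (hlam2 : 0 < lam2) (hc : 0 < c)
    (σ β : Fin k → ℝ)
    (hσpos : ∀ j, 0 < σ j) (hβpos : ∀ j, 0 < β j)
    (hσanti : Antitone σ)
    (hσ0 : σ ⟨0, by omega⟩ = 1) (hσlast : σ ⟨k - 1, by omega⟩ = 1 / κ)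
    (hβmono : Monotone β)
    (hanti : Antitone (fun j => σ j ^ 2 * β j))
    (β' : Fin k → ℝ)
    (hβ' : ∀ j, β' j = ((σ j * β j) ^ 2 + lam2) / (c * σ j ^ 2 * β j)) :
    (∀ j, β' j ≤ β' ⟨k - 1, by omega⟩) ∧
    β' ⟨k - 1, by omega⟩
      = ((β ⟨k - 1, by omega⟩) ^ 2 + lam2 * κ ^ 2) / (c * β ⟨k - 1, by omega⟩) ∧
    (∀ j, β' ⟨0, by omega⟩ ≤ β' j) ∧
    β' ⟨0, by omega⟩ = ((β ⟨0, by omega⟩) ^ 2 + lam2) / (c * β ⟨0, by omega⟩) := by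

  have hκ0 : (0:ℝ) < κ := lt_of_lt_of_le one_pos hκ
  have key : ∀ j, β' j = β j / c + lam2 / (c * (σ j ^ 2 * β j)) := by
    intro j
    have h1 := (hσpos j).ne'
    have h2 := (hβpos j).ne'
    rw [hβ' j]
    field_simp
  have hle : ∀ j j', j ≤ j' → β' j ≤ β' j' := by
    intro j j' hjj
    rw [key j, key j']
    have h1 : β j / c ≤ β j' / c := by gcongr; exact hβmono hjj
    have hpos' : 0 < c * (σ j' ^ 2 * β j') :=
      mul_pos hc (mul_pos (pow_pos (hσpos j') 2) (hβpos j'))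
    have h2 : lam2 / (c * (σ j ^ 2 * β j)) ≤ lam2 / (c * (σ j' ^ 2 * β j')) := by
      apply div_le_div_of_nonneg_left hlam2.le hpos'
      exact mul_le_mul_of_nonneg_left (hanti hjj) hc.le
    linarith
  have hlastle : ∀ j : Fin k, j ≤ (⟨k - 1, by omega⟩ : Fin k) := by
    intro j
    have := j.isLt
    exact Fin.mk_le_mk.mpr (by omega) |>.trans_eq rfl
  have h0le : ∀ j : Fin k, (⟨0, by omega⟩ : Fin k) ≤ j := fun j => Fin.mk_le_mk.mpr (by omega) |>.trans_eq rfl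
  refine ⟨fun j => hle _ _ (hlastle j), ?_, fun j => hle _ _ (h0le j), ?_⟩
  · rw [hβ', hσlast]
    have hb := (hβpos ⟨k - 1, by omega⟩).ne'
    field_simp
  · rw [hβ', hσ0]
    have hb := (hβpos ⟨0, by omega⟩).ne'
    field_simp
end

section
/- Let k ≥ 1 be a natural number, λ₂ ≥ 0, and let σ, β : Fin k → ℝ satisfy 0 < σ_j ≤ 1 and β_j > 0 for all j, with ∑_{j<k} β_j² = 1. Then ∑_{j<k} ( β_j + λ₂/(σ_j² β_j) )² ≥ (1 + k λ₂)². -/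
/-- Lower bound of Appendix D of the paper for the normalization constant of the
AOP iteration: `∑_j (β_j + λ₂/(σ_j² β_j))² ≥ (1 + k λ₂)²`. -/
theorem aop_normalization_constant_lower_bound
    (k : ℕ) (hk : 1 ≤ k) (lam2 : ℝ) (hlam2 : 0 ≤ lam2)
    (σ β : Fin k → ℝ)
    (hσ : ∀ j, 0 < σ j ∧ σ j ≤ 1) (hβ : ∀ j, 0 < β j)
    (hsum : ∑ j, β j ^ 2 = 1) :
    ∑ j : Fin k, (β j + lam2 / (σ j ^ 2 * β j)) ^ 2 ≥ (1 + (k : ℝ) * lam2) ^ 2 := by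
  have hcs : ((k : ℝ))^2 ≤ ∑ j : Fin k, (1 / β j)^2 := by
    have h' := Finset.sum_mul_sq_le_sq_mul_sq Finset.univ β (fun j => 1 / β j)
    have heq : ∑ j : Fin k, β j * (1 / β j) = (k : ℝ) := by
      rw [Finset.sum_congr rfl (fun j _ => mul_one_div_cancel (hβ j).ne')]
      simp
    rw [heq, hsum, one_mul] at h'
    simpa using h'
  have hterm : ∀ j : Fin k,
      β j ^ 2 + 2 * lam2 + lam2 ^ 2 * (1 / β j) ^ 2 ≤ (β j + lam2 / (σ j ^ 2 * β j)) ^ 2 := by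
    intro j
    obtain ⟨hσ0, hσ1⟩ := hσ j
    have hb := hβ j
    have hσ2 : 0 < σ j ^ 2 := by positivity
    have hσ2le : σ j ^ 2 ≤ 1 := by nlinarith
    have hx : lam2 / β j ≤ lam2 / (σ j ^ 2 * β j) := by
      apply div_le_div_of_nonneg_left hlam2 (by positivity)
      nlinarith
    have hx0 : 0 ≤ lam2 / β j := by positivity
    have hexp : β j ^ 2 + 2 * lam2 + lam2 ^ 2 * (1 / β j) ^ 2 = (β j + lam2 / β j) ^ 2 := by
      field_simp; ring
    rw [hexp]
    apply pow_le_pow_left₀ (by positivity)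
    linarith
  calc (1 + (k : ℝ) * lam2) ^ 2
      = 1 + 2 * (k : ℝ) * lam2 + lam2 ^ 2 * (k : ℝ)^2 := by ring
    _ ≤ ∑ j : Fin k, (β j ^ 2 + 2 * lam2 + lam2 ^ 2 * (1 / β j) ^ 2) := by
        rw [Finset.sum_add_distrib, Finset.sum_add_distrib, hsum,
          Finset.sum_const, Finset.card_univ, Fintype.card_fin, nsmul_eq_mul,
          ← Finset.mul_sum]
        nlinarith [mul_le_mul_of_nonneg_left hcs (sq_nonneg lam2)]
    _ ≤ ∑ j : Fin k, (β j + lam2 / (σ j ^ 2 * β j)) ^ 2 :=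
        Finset.sum_le_sum (fun j _ => hterm j)
end
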